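/- Let d ≥ 1, m ∈ ℝ^d, σ ∈ (0,∞)^d, and let ℓ(y|m,σ) = ∏_{i=1}^d (2πσ_i²)^{−1/2} exp(−(y_i−m_i)²/(2σ_i²)) be the density of a vector of independent normals Y_i ∼ N(m_i, σ_i²). For multi-indices j, k ∈ ℤ_{≥0}^d with j* = Σ_i j_i and k* = Σ_i k_i, define κ(j,k) = E[ (∂^{j*} ℓ(Y|m,σ)/∏_i (∂m_i)^{j_i}) · (∂^{k*} ℓ(Y|m,σ)/∏_i (∂m_i)^{k_i}) / ℓ(Y|m,σ)² ] and, for i′ ∈ {1,…,d}, ρ(j,i′) = E[ ((∂^{j*} ℓ(Y|m,σ)/∏_i (∂m_i)^{j_i}) / ℓ(Y|m,σ)) · (∂ log ℓ(Y|m,σ)/∂σ_{i′}) ]. Then κ(j,k) = 1{j = k} · ∏_{i=1}^d j_i!/σ_i^{2 j_i}, and ρ(j,i′) = 2/σ_{i′}³ if j_{i′} = 2 and all other entries of j are zero, and ρ(j,i′) = 0 otherwise. -/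

import Mathlib

noncomputable section

/-- Partial derivative of `f : ℝ^d → ℝ` in the `i`-th coordinate. -/
def pd {d : ℕ} (i : Fin d) (f : (Fin d → ℝ) → ℝ) (x : Fin d → ℝ) : ℝ :=
  deriv (fun t => f (Function.update x i t)) (x i)

/-- Mixed partial derivative `D^m = ∂^{|m|}/∂x₁^{m₁}⋯∂x_d^{m_d}` for a
multi-index `m : Fin d → ℕ`. -/
def mderiv {d : ℕ} (m : Fin d → ℕ) (f : (Fin d → ℝ) → ℝ) : (Fin d → ℝ) → ℝ :=
  (List.finRange d).foldr (fun i g => (pd i)^[m i] g) f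

/-- The `N(m,σ²)` density. -/
def gpdf (m σ y : ℝ) : ℝ :=
  (Real.sqrt (2 * Real.pi * σ ^ 2))⁻¹ * Real.exp (-(y - m) ^ 2 / (2 * σ ^ 2))

/-!
In the mean parameter, the `n`-th derivative of the `N(m, σ²)` density is
`σ⁻ⁿ Heₙ((y - m)/σ)` times the density, where `Heₙ` are the probabilists' Hermite polynomials.
These are orthogonal for the standard Gaussian weight, `∫ Heₙ Heₖ φ = n! √(2π) δₙₖ`, by repeated
integration by parts using `(Heₙ φ)' = -Heₙ₊₁ φ` and `Heₖ₊₁' = (k + 1) Heₖ`. Since `ℓ` is a product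
over the coordinates, so are `D^j ℓ · D^k ℓ / ℓ`, and Fubini reduces `κ(j, k)` to one-dimensional
orthogonality relations.

For `ρ`, the density solves the heat equation `∂ℓ/∂σᵢ = σᵢ ∂²ℓ/∂mᵢ²`, so the score in `σᵢ'` is
`σᵢ' · D^{2eᵢ'} ℓ / ℓ` and `ρ(j, i') = σᵢ' κ(j, 2eᵢ')`.
-/

open Real MeasureTheory Polynomial Finset
open scoped Nat Topology

namespace Polynomial

theorem derivative_hermite_succ (n : ℕ) :
    derivative (hermite (n + 1)) = ((n : ℤ[X]) + 1) * hermite n := by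
  induction n with
  | zero => simp [hermite_zero]
  | succ n ih =>
    rw [hermite_succ (n + 1), derivative_sub, derivative_mul, derivative_X, ih,
      derivative_mul, hermite_succ n]
    simp only [derivative_add, derivative_natCast, derivative_one]
    push_cast
    ring

theorem hasDerivAt_aeval_hermite_mul_gaussian (n : ℕ) (x : ℝ) :
    HasDerivAt (fun x : ℝ => aeval x (hermite n) * exp (-(x ^ 2 / 2)))
      (-(aeval x (hermite (n + 1)) * exp (-(x ^ 2 / 2)))) x := by
  have hgauss : HasDerivAt (fun x : ℝ => exp (-(x ^ 2 / 2))) (exp (-(x ^ 2 / 2)) * -x) x := by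
    simpa using (((hasDerivAt_pow 2 x).div_const 2).neg).exp
  refine ((hermite n).hasDerivAt_aeval x |>.mul hgauss).congr_deriv ?_
  rw [hermite_succ, map_sub, map_mul, aeval_X]
  ring

theorem integrable_aeval_mul_gaussian (p : ℤ[X]) :
    Integrable (fun x : ℝ => aeval x p * exp (-(x ^ 2 / 2))) := by
  have hmono (i : ℕ) : Integrable (fun x : ℝ => x ^ i * exp (-(x ^ 2 / 2))) := by
    have := integrable_rpow_mul_exp_neg_mul_sq (b := 1 / 2) (by norm_num) (s := i)
      (by linarith [(Nat.cast_nonneg i : (0 : ℝ) ≤ i)])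
    refine this.congr (ae_of_all _ fun x => ?_)
    simp only [rpow_natCast]
    ring_nf
  simp_rw [aeval_eq_sum_range, Finset.sum_mul]
  refine integrable_finsetSum _ fun i _ => ?_
  simpa [zsmul_eq_mul, mul_assoc] using (hmono i).const_mul (p.coeff i : ℝ)

theorem integral_aeval_mul_hermite_succ_mul_gaussian (p : ℤ[X]) (n : ℕ) :
    ∫ x : ℝ, aeval x p * (aeval x (hermite (n + 1)) * exp (-(x ^ 2 / 2)))
      = ∫ x : ℝ, aeval x (derivative p) * (aeval x (hermite n) * exp (-(x ^ 2 / 2))) := by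
  have hint (q r : ℤ[X]) :
      Integrable (fun x : ℝ => aeval x q * (aeval x r * exp (-(x ^ 2 / 2)))) := by
    simpa [mul_assoc] using integrable_aeval_mul_gaussian (q * r)
  have hv (x : ℝ) : HasDerivAt (fun x => -(aeval x (hermite n) * exp (-(x ^ 2 / 2))))
      (aeval x (hermite (n + 1)) * exp (-(x ^ 2 / 2))) x := by
    simpa only [neg_neg] using (hasDerivAt_aeval_hermite_mul_gaussian n x).fun_neg
  have hparts := integral_mul_deriv_eq_deriv_mul_of_integrable
    (u := fun x => aeval x p) (u' := fun x => aeval x (derivative p))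
    (fun x _ => p.hasDerivAt_aeval x) (fun x _ => hv x)
    (hint _ _) (by simpa [Pi.mul_def] using (hint (derivative p) (hermite n)).neg)
    (by simpa [Pi.mul_def] using (hint p (hermite n)).neg)
  simpa [integral_neg] using hparts

theorem integral_aeval_hermite_mul_hermite_mul_gaussian (n k : ℕ) :
    ∫ x : ℝ, aeval x (hermite n) * (aeval x (hermite k) * exp (-(x ^ 2 / 2)))
      = if n = k then (n ! : ℝ) * √(2 * π) else 0 := by
  induction n generalizing k with
  | zero =>
    rcases k with _ | k
    · simpa [hermite_zero, div_eq_inv_mul, mul_comm] using integral_gaussian (1 / 2)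
    · simpa [hermite_zero] using integral_aeval_mul_hermite_succ_mul_gaussian 1 k
  | succ n ih =>
    simp_rw [mul_left_comm (aeval _ (hermite (n + 1)))]
    rw [integral_aeval_mul_hermite_succ_mul_gaussian]
    rcases k with _ | k
    · simp [hermite_zero]
    · simp_rw [derivative_hermite_succ, map_mul, mul_assoc, mul_left_comm (aeval _ (hermite k))]
      simp only [map_add, map_natCast, map_one]
      rw [integral_const_mul, ih k]
      split_ifs <;> simp_all [Nat.factorial_succ, mul_assoc]

end Polynomial

section GaussianDensity

variable {σ : ℝ}

theorem gpdf_eq_of_pos (hσ : 0 < σ) (m y : ℝ) :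
    gpdf m σ y = (√(2 * π) * σ)⁻¹ * exp (-(((y - m) / σ) ^ 2 / 2)) := by
  rw [gpdf, sqrt_mul' _ (sq_nonneg σ), sqrt_sq hσ.le, div_pow]
  congr 2
  field_simp

theorem gpdf_pos (hσ : 0 < σ) (m y : ℝ) : 0 < gpdf m σ y := by
  rw [gpdf_eq_of_pos hσ]
  positivity

theorem iterate_deriv_gpdf_mean (hσ : 0 < σ) (y : ℝ) (n : ℕ) :
    deriv^[n] (fun t => gpdf t σ y)
      = fun t => σ⁻¹ ^ n * aeval ((y - t) / σ) (hermite n) * gpdf t σ y := by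
  induction n with
  | zero => simp [hermite_zero]
  | succ n ih =>
    have hz (t : ℝ) : HasDerivAt (fun t => (y - t) / σ) (-σ⁻¹) t := by
      simpa [div_eq_mul_inv] using ((hasDerivAt_id t).const_sub y).div_const σ
    have hstep (t : ℝ) :
        HasDerivAt (fun t => σ⁻¹ ^ n * aeval ((y - t) / σ) (hermite n) * gpdf t σ y)
        (σ⁻¹ ^ (n + 1) * aeval ((y - t) / σ) (hermite (n + 1)) * gpdf t σ y) t := by
      have h := ((hasDerivAt_aeval_hermite_mul_gaussian n _).comp t (hz t)).const_mul
        ((√(2 * π) * σ)⁻¹ * σ⁻¹ ^ n)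
      refine (h.congr_of_eventuallyEq (.of_forall fun s => ?_)).congr_deriv ?_
      all_goals simp only [Function.comp_apply, gpdf_eq_of_pos hσ]; ring
    funext t
    rw [Function.iterate_succ_apply', ih, (hstep t).deriv]

theorem integral_iterate_deriv_gpdf_mul_iterate_deriv_gpdf_div (hσ : 0 < σ) (m : ℝ) (n k : ℕ) :
    ∫ y, deriv^[n] (fun t => gpdf t σ y) m * deriv^[k] (fun t => gpdf t σ y) m / gpdf m σ y
      = if n = k then (n ! : ℝ) / σ ^ (2 * n) else 0 := by
  set G : ℝ → ℝ := fun x => aeval x (hermite n) * (aeval x (hermite k) * exp (-(x ^ 2 / 2)))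
  have hpt (y : ℝ) :
      deriv^[n] (fun t => gpdf t σ y) m * deriv^[k] (fun t => gpdf t σ y) m / gpdf m σ y
        = (σ⁻¹ ^ (n + k) * (√(2 * π) * σ)⁻¹) * G ((y - m) / σ) := by
    simp only [iterate_deriv_gpdf_mean hσ]
    rw [mul_div_assoc, mul_div_cancel_right₀ _ (gpdf_pos hσ m y).ne', gpdf_eq_of_pos hσ]
    ring
  have hscale : ∫ y, G ((y - m) / σ) = σ * ∫ x, G x := by
    rw [integral_sub_right_eq_self (fun y => G (y / σ)) m, Measure.integral_comp_div,
      abs_of_pos hσ, smul_eq_mul]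
  simp_rw [hpt, integral_const_mul, hscale, G, integral_aeval_hermite_mul_hermite_mul_gaussian]
  split_ifs with h
  · subst h
    rw [← two_mul, inv_pow]
    field_simp
  · simp

theorem hasDerivAt_gpdf_scale (hσ : 0 < σ) (m y : ℝ) :
    HasDerivAt (fun s => gpdf m s y) (σ * deriv^[2] (fun t => gpdf t σ y) m) σ := by
  have hlocal : (fun s => (√(2 * π) * s)⁻¹ * exp (-(((y - m) / s) ^ 2 / 2))) =ᶠ[𝓝 σ]
      fun s => gpdf m s y :=
    (eventually_gt_nhds hσ).mono fun s hs => (gpdf_eq_of_pos hs m y).symm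
  have h := (((hasDerivAt_id σ).const_mul √(2 * π)).inv (by positivity)).mul
    (((((hasDerivAt_const σ (y - m)).div (hasDerivAt_id σ) hσ.ne').pow 2).div_const 2).neg.exp)
  refine (h.congr_of_eventuallyEq hlocal.symm).congr_deriv ?_
  have hHe2 (z : ℝ) : aeval z (hermite 2) = z ^ 2 - 1 := by simp [hermite_succ, sq]
  rw [iterate_deriv_gpdf_mean hσ]
  simp only [hHe2, gpdf_eq_of_pos hσ, id, Pi.inv_apply, Pi.div_apply, Pi.pow_apply,
    Pi.neg_apply, Nat.add_one_sub_one, pow_one, Nat.cast_ofNat]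
  field_simp
  ring

end GaussianDensity

theorem Finset.prod_apply_update {ι M : Type*} {α : ι → Type*} [Fintype ι] [DecidableEq ι]
    [CommMonoid M] (G : ∀ i, α i → M) (x : ∀ i, α i) (i : ι) (t : α i) :
    ∏ l, G l (Function.update x i t l) = G i t * ∏ l ∈ univ.erase i, G l (x l) := by
  simp_rw [Function.apply_update G x i t, Finset.prod_update_of_mem (mem_univ i),
    sdiff_singleton_eq_erase]

section PartialDerivatives

variable {d : ℕ}

theorem pd_prod (G : Fin d → ℝ → ℝ) (i : Fin d) :
    pd i (fun x => ∏ l, G l (x l))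
      = fun x => ∏ l, Function.update G i (deriv (G i)) l (x l) := by
  funext x
  simp_rw [pd, Finset.prod_apply_update, deriv_mul_const_field,
    ← mul_prod_erase univ _ (mem_univ i), Function.update_self]
  congr 1
  exact prod_congr rfl fun l hl => by rw [Function.update_of_ne (ne_of_mem_erase hl)]

theorem iterate_pd_prod (G : Fin d → ℝ → ℝ) (i : Fin d) (n : ℕ) :
    (pd i)^[n] (fun x => ∏ l, G l (x l))
      = fun x => ∏ l, Function.update G i (deriv^[n] (G i)) l (x l) := by
  induction n with
  | zero => simp
  | succ n ih =>
    rw [Function.iterate_succ_apply', ih, pd_prod, Function.update_idem, Function.update_self,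
      Function.iterate_succ_apply']

theorem mderiv_prod (j : Fin d → ℕ) (G : Fin d → ℝ → ℝ) :
    mderiv j (fun x => ∏ l, G l (x l)) = fun x => ∏ l, deriv^[j l] (G l) (x l) := by
  have hfold (L : List (Fin d)) (hL : L.Nodup) :
      L.foldr (fun i g => (pd i)^[j i] g) (fun x => ∏ l, G l (x l))
        = fun x => ∏ l, (if l ∈ L then deriv^[j l] (G l) else G l) (x l) := by
    induction L with
    | nil => simp
    | cons i L ih =>
      rw [List.nodup_cons] at hL
      rw [List.foldr_cons, ih hL.2, iterate_pd_prod]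
      funext x
      refine prod_congr rfl fun l _ => ?_
      rcases eq_or_ne l i with rfl | hl
      · simp [hL.1]
      · simp [hl]
  simp [mderiv, hfold _ (List.nodup_finRange d)]

theorem pd_log_prod (G : Fin d → ℝ → ℝ) (x : Fin d → ℝ) (i : Fin d) {g' : ℝ}
    (hG : HasDerivAt (G i) g' (x i)) (hne : ∀ l, G l (x l) ≠ 0) :
    pd i (fun x => log (∏ l, G l (x l))) x = g' / G i (x i) := by
  have hC : ∏ l ∈ univ.erase i, G l (x l) ≠ 0 := prod_ne_zero_iff.2 fun l _ => hne l
  simp_rw [pd, Finset.prod_apply_update]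
  rw [((hG.mul_const _).log (mul_ne_zero (hne i) hC)).deriv, mul_div_mul_right _ _ hC]

end PartialDerivatives

section IndependentGaussians

variable {d : ℕ} {σ : Fin d → ℝ}

theorem integral_mderiv_prod_gpdf_mul_mderiv_div (hσ : ∀ i, 0 < σ i) (m : Fin d → ℝ)
    (j k : Fin d → ℕ) :
    ∫ y : Fin d → ℝ,
        mderiv j (fun m' => ∏ i, gpdf (m' i) (σ i) (y i)) m
          * mderiv k (fun m' => ∏ i, gpdf (m' i) (σ i) (y i)) m
          / ∏ i, gpdf (m i) (σ i) (y i)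
      = if j = k then ∏ i, (Nat.factorial (j i) : ℝ) / σ i ^ (2 * j i) else 0 := by
  have hfactor (y : Fin d → ℝ) :
      mderiv j (fun m' => ∏ i, gpdf (m' i) (σ i) (y i)) m
          * mderiv k (fun m' => ∏ i, gpdf (m' i) (σ i) (y i)) m
          / ∏ i, gpdf (m i) (σ i) (y i)
        = ∏ i, deriv^[j i] (fun t => gpdf t (σ i) (y i)) (m i)
            * deriv^[k i] (fun t => gpdf t (σ i) (y i)) (m i) / gpdf (m i) (σ i) (y i) := by
    rw [mderiv_prod j (fun i t => gpdf t (σ i) (y i)),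
      mderiv_prod k (fun i t => gpdf t (σ i) (y i)), ← prod_mul_distrib, ← prod_div_distrib]
  simp_rw [hfactor]
  rw [integral_fintype_prod_volume_eq_prod (fun i yi => deriv^[j i] (fun t => gpdf t (σ i) yi) (m i)
    * deriv^[k i] (fun t => gpdf t (σ i) yi) (m i) / gpdf (m i) (σ i) yi)]
  simp_rw [integral_iterate_deriv_gpdf_mul_iterate_deriv_gpdf_div (hσ _), Fintype.prod_ite_zero,
    ← funext_iff]

theorem pd_log_prod_gpdf_scale (hσ : ∀ i, 0 < σ i) (m y : Fin d → ℝ) (i' : Fin d) :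
    pd i' (fun σ' => log (∏ i, gpdf (m i) (σ' i) (y i))) σ
      = σ i' * (mderiv (Pi.single i' 2) (fun m' => ∏ i, gpdf (m' i) (σ i) (y i)) m
          / ∏ i, gpdf (m i) (σ i) (y i)) := by
  rw [pd_log_prod (fun i s => gpdf (m i) s (y i)) σ i' (hasDerivAt_gpdf_scale (hσ i') _ _)
      fun i => (gpdf_pos (hσ i) _ _).ne',
    mderiv_prod _ (fun i t => gpdf t (σ i) (y i))]
  beta_reduce
  rw [← mul_prod_erase univ _ (mem_univ i'),
    ← mul_prod_erase univ (fun i => gpdf (m i) (σ i) (y i)) (mem_univ i')]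
  have hrest :
      ∏ i ∈ univ.erase i', deriv^[(Pi.single i' 2 : Fin d → ℕ) i] (fun t => gpdf t (σ i) (y i)) (m i)
        = ∏ i ∈ univ.erase i', gpdf (m i) (σ i) (y i) :=
    prod_congr rfl fun i hi => by rw [Pi.single_eq_of_ne (ne_of_mem_erase hi)]; rfl
  have hC : ∏ i ∈ univ.erase i', gpdf (m i) (σ i) (y i) ≠ 0 :=
    prod_ne_zero_iff.2 fun i _ => (gpdf_pos (hσ i) _ _).ne'
  rw [hrest, Pi.single_eq_same, mul_div_mul_right _ _ hC, mul_div_assoc]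

end IndependentGaussians

theorem stmt6_general (d : ℕ) (m σ : Fin d → ℝ) (hσ : ∀ i, 0 < σ i)
    (j k : Fin d → ℕ) (i' : Fin d) :
    ((∫ y : Fin d → ℝ,
        mderiv j (fun m' => ∏ i, gpdf (m' i) (σ i) (y i)) m
          * mderiv k (fun m' => ∏ i, gpdf (m' i) (σ i) (y i)) m
          / ∏ i, gpdf (m i) (σ i) (y i))
      = if j = k then ∏ i, (Nat.factorial (j i) : ℝ) / σ i ^ (2 * j i) else 0)
    ∧ ((∫ y : Fin d → ℝ,
        (mderiv j (fun m' => ∏ i, gpdf (m' i) (σ i) (y i)) m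
            / ∏ i, gpdf (m i) (σ i) (y i))
          * pd i' (fun σ' => Real.log (∏ i, gpdf (m i) (σ' i) (y i))) σ
          * ∏ i, gpdf (m i) (σ i) (y i))
      = if j i' = 2 ∧ ∀ i, i ≠ i' → j i = 0 then 2 / σ i' ^ 3 else 0) := by
  refine ⟨integral_mderiv_prod_gpdf_mul_mderiv_div hσ m j k, ?_⟩
  have hρ (y : Fin d → ℝ) :
      (mderiv j (fun m' => ∏ i, gpdf (m' i) (σ i) (y i)) m / ∏ i, gpdf (m i) (σ i) (y i))
          * pd i' (fun σ' => Real.log (∏ i, gpdf (m i) (σ' i) (y i))) σ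
          * ∏ i, gpdf (m i) (σ i) (y i)
        = σ i' * (mderiv j (fun m' => ∏ i, gpdf (m' i) (σ i) (y i)) m
            * mderiv (Pi.single i' 2) (fun m' => ∏ i, gpdf (m' i) (σ i) (y i)) m
            / ∏ i, gpdf (m i) (σ i) (y i)) := by
    have := (prod_pos fun i (_ : i ∈ univ) => gpdf_pos (hσ i) (m i) (y i)).ne'
    rw [pd_log_prod_gpdf_scale hσ]
    field_simp
  have hsingle : j = Pi.single i' 2 ↔ j i' = 2 ∧ ∀ i, i ≠ i' → j i = 0 := by
    rw [eq_comm, Pi.single, Function.update_eq_iff]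
    simp [eq_comm]
  simp_rw [hρ]
  rw [integral_const_mul, integral_mderiv_prod_gpdf_mul_mderiv_div hσ, ← if_congr hsingle rfl rfl]
  split_ifs with h
  · subst h
    rw [Fintype.prod_eq_single i' fun i hi => by simp [Pi.single_eq_of_ne hi], Pi.single_eq_same]
    have := (hσ i').ne'
    field_simp
    norm_num
  · rw [mul_zero]

/-- **Bhattacharyya-basis moments for a vector of independent normals.**
For `Y ∼ N(m, diag(σ₁²,…,σ_d²))` and multi-indices `j, k ∈ ℤ_{≥0}^d`,
`κ(j,k) = E[(D^j_m ℓ)(D^k_m ℓ)/ℓ²] = 1{j = k} ∏ᵢ jᵢ!/σᵢ^{2jᵢ}`, and for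
`i' ∈ {1,…,d}`, `ρ(j,i') = E[((D^j_m ℓ)/ℓ)·(∂ log ℓ/∂σ_{i'})]` equals
`2/σ_{i'}³` if `j_{i'} = 2` and all other entries of `j` vanish, and `0`
otherwise. -/
theorem stmt6 (d : ℕ) (hd : 1 ≤ d) (m σ : Fin d → ℝ) (hσ : ∀ i, 0 < σ i)
    (j k : Fin d → ℕ) (i' : Fin d) :
    ((∫ y : Fin d → ℝ,
        mderiv j (fun m' => ∏ i, gpdf (m' i) (σ i) (y i)) m
          * mderiv k (fun m' => ∏ i, gpdf (m' i) (σ i) (y i)) m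
          / ∏ i, gpdf (m i) (σ i) (y i))
      = if j = k then ∏ i, (Nat.factorial (j i) : ℝ) / σ i ^ (2 * j i) else 0)
    ∧ ((∫ y : Fin d → ℝ,
        (mderiv j (fun m' => ∏ i, gpdf (m' i) (σ i) (y i)) m
            / ∏ i, gpdf (m i) (σ i) (y i))
          * pd i' (fun σ' => Real.log (∏ i, gpdf (m i) (σ' i) (y i))) σ
          * ∏ i, gpdf (m i) (σ i) (y i))
      = if j i' = 2 ∧ ∀ i, i ≠ i' → j i = 0 then 2 / σ i' ^ 3 else 0) :=
  stmt6_general d m σ hσ j k i'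

end
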